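/- arXiv:2502.02930 — 2 statements merged into one kernel-verified Lean document; each statement's English description precedes it below -/
import Mathlib

section
/- Let D be a proper subdomain of a Banach space, let z₁, z₂ ∈ D, and let γ ⊂ D be a rectifiable arc with endpoints z₁ and z₂. Then ℓ_k(γ) ≥ log(1 + ℓ(γ)/min{d_D(z₁), d_D(z₂)}). -/
open Set Metric MeasureTheory

noncomputable section

variable {E : Type*} [NormedAddCommGroup E]

/-- Distance from a point to the boundary (= complement) of `D`. -/
def dB (D : Set E) (z : E) : ℝ := Metric.infDist z Dᶜ

/-- `D` is a proper subdomain of the ambient space. -/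
def IsProperDomain (D : Set E) : Prop := IsOpen D ∧ IsConnected D ∧ Dᶜ.Nonempty

/-- A rectifiable arc inside `D`, parametrized by arclength on `[a,b]`. -/
structure IsArc (D : Set E) (γ : ℝ → E) (a b : ℝ) : Prop where
  le : a ≤ b
  lip : LipschitzOnWith 1 γ (Set.Icc a b)
  unit : ∀ s t, s ∈ Set.Icc a b → t ∈ Set.Icc a b → s ≤ t →
    eVariationOn γ (Set.Icc s t) = ENNReal.ofReal (t - s)
  mem : ∀ t ∈ Set.Icc a b, γ t ∈ D

/-- Quasihyperbolic length of the piece on `[a,b]` of an arclength-parametrized arc. -/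
def qhLen (D : Set E) (γ : ℝ → E) (a b : ℝ) : ℝ := ∫ t in a..b, 1 / dB D (γ t)

/-- The quasihyperbolic distance in `D`: infimum of quasihyperbolic lengths of
arcs joining the two points. -/
def qhDist (D : Set E) (x y : E) : ℝ :=
  sInf { L : ℝ | ∃ T : ℝ, ∃ γ : ℝ → E,
    IsArc D γ 0 T ∧ γ 0 = x ∧ γ T = y ∧ L = qhLen D γ 0 T }

/-- `γ` is a `c`-quasigeodesic in `D` on `[a,b]`. -/
def IsQuasigeodesicOn (D : Set E) (c : ℝ) (γ : ℝ → E) (a b : ℝ) : Prop :=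
  IsArc D γ a b ∧ ∀ s t, s ∈ Set.Icc a b → t ∈ Set.Icc a b → s ≤ t →
    qhLen D γ s t ≤ c * qhDist D (γ s) (γ t)

/-- The coefficient `c_{x,y}^λ = min (1 + λ/(2 k_D(x,y))) (9/8)`. -/
def cLam (D : Set E) (lam : ℝ) (x y : E) : ℝ :=
  min (1 + lam / (2 * qhDist D x y)) (9 / 8)

/-- `γ` is a `λ`-curve in `D` on `[a,b]`: a `c_{x,y}^λ`-quasigeodesic where `x,y`
are its endpoints. -/
def IsLamCurve (D : Set E) (lam : ℝ) (γ : ℝ → E) (a b : ℝ) : Prop :=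
  IsQuasigeodesicOn D (cLam D lam (γ a) (γ b)) γ a b

/-- `γ` is `h`-short in `D`. -/
def IsShort (D : Set E) (h : ℝ) (γ : ℝ → E) (a b : ℝ) : Prop :=
  IsArc D γ a b ∧ ∀ s t, s ∈ Set.Icc a b → t ∈ Set.Icc a b → s ≤ t →
    qhLen D γ s t ≤ qhDist D (γ s) (γ t) + h

/-- The point `w` lies within quasihyperbolic distance `C` of the union of the
two given sides. -/
def WithinOfSides (D : Set E) (C : ℝ) (w : E) (α : ℝ → E) (a b : ℝ)
    (α' : ℝ → E) (a' b' : ℝ) : Prop :=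
  ∃ s : ℝ, (s ∈ Set.Icc a b ∧ qhDist D w (α s) ≤ C) ∨
    (s ∈ Set.Icc a' b' ∧ qhDist D w (α' s) ≤ C)

/-- `(D, k_D)` is a `(C,h)`-Rips space: every side of an `h`-short triangle lies
in the `C`-neighbourhood of the two other sides. -/
def IsRips (D : Set E) (C h : ℝ) : Prop :=
  ∀ (α₁ α₂ α₃ : ℝ → E) (a₁ b₁ a₂ b₂ a₃ b₃ : ℝ),
    IsShort D h α₁ a₁ b₁ → IsShort D h α₂ a₂ b₂ → IsShort D h α₃ a₃ b₃ →
    α₁ b₁ = α₂ a₂ → α₂ b₂ = α₃ a₃ → α₃ b₃ = α₁ a₁ →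
    (∀ t ∈ Set.Icc a₁ b₁, WithinOfSides D C (α₁ t) α₂ a₂ b₂ α₃ a₃ b₃) ∧
    (∀ t ∈ Set.Icc a₂ b₂, WithinOfSides D C (α₂ t) α₃ a₃ b₃ α₁ a₁ b₁) ∧
    (∀ t ∈ Set.Icc a₃ b₃, WithinOfSides D C (α₃ t) α₁ a₁ b₁ α₂ a₂ b₂)

/-- `D` is `δ`-Gromov hyperbolic with respect to the quasihyperbolic metric. -/
def IsGromovHyp (D : Set E) (δ : ℝ) : Prop :=
  ∀ x ∈ D, ∀ y ∈ D, ∀ z ∈ D, ∀ p ∈ D,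
    min ((qhDist D p x + qhDist D p y - qhDist D x y) / 2)
        ((qhDist D p y + qhDist D p z - qhDist D y z) / 2) - δ ≤
      (qhDist D p x + qhDist D p z - qhDist D x z) / 2

/-- `μ` is a thin-triangles constant for triangles of `c₀`-quasigeodesics in `D`. -/
def ThinTriangles (D : Set E) (c₀ μ : ℝ) : Prop :=
  ∀ (γ₁ γ₂ γ₃ : ℝ → E) (a₁ b₁ a₂ b₂ a₃ b₃ : ℝ),
    IsQuasigeodesicOn D c₀ γ₁ a₁ b₁ → IsQuasigeodesicOn D c₀ γ₂ a₂ b₂ →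
    IsQuasigeodesicOn D c₀ γ₃ a₃ b₃ →
    γ₁ b₁ = γ₂ a₂ → γ₂ b₂ = γ₃ a₃ → γ₃ b₃ = γ₁ a₁ →
    ∀ t ∈ Set.Icc a₁ b₁, WithinOfSides D μ (γ₁ t) γ₂ a₂ b₂ γ₃ a₃ b₃

/-- `D` is a `c`-uniform domain. -/
def IsUniform (D : Set E) (c : ℝ) : Prop :=
  ∀ z₁ ∈ D, ∀ z₂ ∈ D, ∃ γ : ℝ → E, ∃ a b : ℝ, IsArc D γ a b ∧ γ a = z₁ ∧ γ b = z₂ ∧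
    (∀ t ∈ Set.Icc a b, min (t - a) (b - t) ≤ c * dB D (γ t)) ∧
    b - a ≤ c * ‖z₁ - z₂‖

/-- `D` is an `a`-John domain. -/
def IsJohn (D : Set E) (a : ℝ) : Prop :=
  ∀ z₁ ∈ D, ∀ z₂ ∈ D, ∃ γ : ℝ → E, ∃ s t : ℝ, IsArc D γ s t ∧ γ s = z₁ ∧ γ t = z₂ ∧
    ∀ u ∈ Set.Icc s t, min (u - s) (t - u) ≤ a * dB D (γ u)

/-- The inner (length) distance in `D`. -/
def innerDist (D : Set E) (x y : E) : ℝ :=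
  sInf { L : ℝ | ∃ γ : ℝ → E, ∃ s t : ℝ, IsArc D γ s t ∧ γ s = x ∧ γ t = y ∧ L = t - s }

/-- `γ` is an inner `b`-uniform curve in `D`. -/
def IsInnerUniformCurve (D : Set E) (b : ℝ) (γ : ℝ → E) (s t : ℝ) : Prop :=
  (∀ u ∈ Set.Icc s t, min (u - s) (t - u) ≤ b * dB D (γ u)) ∧
  t - s ≤ b * innerDist D (γ s) (γ t)

/-- `D` is an inner `b`-uniform domain. -/
def IsInnerUniform (D : Set E) (b : ℝ) : Prop :=
  ∀ z₁ ∈ D, ∀ z₂ ∈ D, ∃ γ : ℝ → E, ∃ s t : ℝ,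
    IsArc D γ s t ∧ γ s = z₁ ∧ γ t = z₂ ∧ IsInnerUniformCurve D b γ s t

/-- Length (total variation) of a curve on `[a,b]`. -/
def lenOn {F : Type*} [NormedAddCommGroup F] (γ : ℝ → F) (a b : ℝ) : ℝ :=
  (eVariationOn γ (Set.Icc a b)).toReal

variable {F : Type*} [NormedAddCommGroup F]

/-- `f` is a homeomorphism from `D` onto `D'`. -/
def IsHomeoOn (f : E → F) (D : Set E) (D' : Set F) : Prop :=
  ∃ g : F → E, ContinuousOn f D ∧ ContinuousOn g D' ∧ Set.MapsTo f D D' ∧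
    Set.MapsTo g D' D ∧ (∀ x ∈ D, g (f x) = x) ∧ (∀ y ∈ D', f (g y) = y)

/-- `f : D → D'` is `(M,C)`-coarsely quasihyperbolic. -/
def IsCQH (f : E → F) (D : Set E) (D' : Set F) (M C : ℝ) : Prop :=
  ∀ x ∈ D, ∀ y ∈ D,
    (qhDist D x y - C) / M ≤ qhDist D' (f x) (f y) ∧
    qhDist D' (f x) (f y) ≤ M * qhDist D x y + C

/-!
Since `d_D` is 1-Lipschitz and `γ` is parametrized by arclength, `d_D(γ t) ≤ d_D(z₁) + (t - a)`
and `d_D(γ t) ≤ d_D(z₂) + (b - t)`. Comparing the integrand of `ℓ_k(γ)` with `1 / (d + (t - a))`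
for the endpoint realizing the minimum `d` gives the bound, as that comparison function
integrates to `log (1 + (b - a) / d)`.
-/

theorem integral_one_div_add_sub_left {a b d : ℝ} (hab : a ≤ b) (hd : 0 < d) :
    ∫ t in a..b, 1 / (d + (t - a)) = Real.log (1 + (b - a) / d) := by
  have hshift : (fun t => 1 / (d + (t - a))) = fun t => 1 / (t + (d - a)) := by
    ext t; ring_nf
  rw [hshift, intervalIntegral.integral_comp_add_right (fun x => 1 / x),
    integral_one_div_of_pos (by linarith) (by linarith), add_sub_cancel]
  congr 1
  field_simp
  ring

theorem log_one_add_div_le_integral_one_div_of_le_add_sub_left {f : ℝ → ℝ} {a b d : ℝ}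
    (hab : a ≤ b) (hd : 0 < d) (hf : ContinuousOn f (Icc a b))
    (hpos : ∀ t ∈ Icc a b, 0 < f t) (hle : ∀ t ∈ Icc a b, f t ≤ d + (t - a)) :
    Real.log (1 + (b - a) / d) ≤ ∫ t in a..b, 1 / f t := by
  rw [← integral_one_div_add_sub_left hab hd]
  refine intervalIntegral.integral_mono_on hab ?_ ?_
    fun t ht => one_div_le_one_div_of_le (hpos t ht) (hle t ht)
  · refine (continuousOn_const.div (by fun_prop) fun t ht => ?_).intervalIntegrable_of_Icc hab
    linarith [ht.1]
  · exact (continuousOn_const.div hf fun t ht => (hpos t ht).ne').intervalIntegrable_of_Icc hab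

theorem log_one_add_div_le_integral_one_div_of_le_add_sub_right {f : ℝ → ℝ} {a b d : ℝ}
    (hab : a ≤ b) (hd : 0 < d) (hf : ContinuousOn f (Icc a b))
    (hpos : ∀ t ∈ Icc a b, 0 < f t) (hle : ∀ t ∈ Icc a b, f t ≤ d + (b - t)) :
    Real.log (1 + (b - a) / d) ≤ ∫ t in a..b, 1 / f t := by
  have hrefl : MapsTo (fun t => a + b - t) (Icc a b) (Icc a b) := fun t ht =>
    ⟨by linarith [ht.2], by linarith [ht.1]⟩
  have h := log_one_add_div_le_integral_one_div_of_le_add_sub_left (f := fun t => f (a + b - t))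
    hab hd (hf.comp (by fun_prop) hrefl) (fun t ht => hpos _ (hrefl ht))
    fun t ht => by linarith [hle _ (hrefl ht)]
  rwa [intervalIntegral.integral_comp_sub_left (fun x => 1 / f x), add_sub_cancel_left,
    add_sub_cancel_right] at h

theorem dB_pos {D : Set E} (hD : IsProperDomain D) {z : E} (hz : z ∈ D) : 0 < dB D z :=
  (hD.1.isClosed_compl.notMem_iff_infDist_pos hD.2.2).1 (notMem_compl_iff.2 hz)

theorem dB_comp_le_add_abs_sub (D : Set E) {γ : ℝ → E} {S : Set ℝ}
    (hγ : LipschitzOnWith 1 γ S) {s t : ℝ} (hs : s ∈ S) (ht : t ∈ S) :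
    dB D (γ t) ≤ dB D (γ s) + |t - s| :=
  calc dB D (γ t) ≤ dB D (γ s) + dist (γ t) (γ s) := infDist_le_infDist_add_dist
    _ ≤ dB D (γ s) + |t - s| := by
      gcongr
      simpa [Real.dist_eq] using hγ.dist_le_mul t ht s hs

theorem IsArc.continuousOn_dB {D : Set E} {γ : ℝ → E} {a b : ℝ} (hγ : IsArc D γ a b) :
    ContinuousOn (fun t => dB D (γ t)) (Icc a b) :=
  (continuous_infDist_pt _).comp_continuousOn hγ.lip.continuousOn

theorem stmt2_general (D : Set E) (hD : IsProperDomain D) (z₁ z₂ : E)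
    (γ : ℝ → E) (a b : ℝ) (hγ : IsArc D γ a b) (h₁ : γ a = z₁) (h₂ : γ b = z₂) :
    Real.log (1 + (b - a) / min (dB D z₁) (dB D z₂)) ≤ qhLen D γ a b := by
  subst h₁ h₂
  have ha : a ∈ Icc a b := left_mem_Icc.2 hγ.le
  have hb : b ∈ Icc a b := right_mem_Icc.2 hγ.le
  have hpos : ∀ t ∈ Icc a b, 0 < dB D (γ t) := fun t ht => dB_pos hD (hγ.mem t ht)
  rcases le_total (dB D (γ a)) (dB D (γ b)) with hmin | hmin
  · rw [min_eq_left hmin]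
    refine log_one_add_div_le_integral_one_div_of_le_add_sub_left hγ.le (hpos a ha)
      hγ.continuousOn_dB hpos fun t ht => ?_
    simpa [abs_of_nonneg (sub_nonneg.2 ht.1)] using dB_comp_le_add_abs_sub D hγ.lip ha ht
  · rw [min_eq_right hmin]
    refine log_one_add_div_le_integral_one_div_of_le_add_sub_right hγ.le (hpos b hb)
      hγ.continuousOn_dB hpos fun t ht => ?_
    simpa [abs_sub_comm t b, abs_of_nonneg (sub_nonneg.2 ht.2)] using
      dB_comp_le_add_abs_sub D hγ.lip hb ht

/-- For a rectifiable arc `γ` in `D` with endpoints `z₁, z₂`,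
`ℓ_k(γ) ≥ log (1 + ℓ(γ) / min (d_D z₁) (d_D z₂))`. -/
theorem stmt2 [NormedSpace ℝ E] [CompleteSpace E]
    (D : Set E) (hD : IsProperDomain D) (z₁ z₂ : E) (hz₁ : z₁ ∈ D) (hz₂ : z₂ ∈ D)
    (γ : ℝ → E) (a b : ℝ) (hγ : IsArc D γ a b) (h₁ : γ a = z₁) (h₂ : γ b = z₂) :
    Real.log (1 + (b - a) / min (dB D z₁) (dB D z₂)) ≤ qhLen D γ a b :=
  stmt2_general D hD z₁ z₂ γ a b hγ h₁ h₂

end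
end

section
/- Let D be a proper subdomain of a Banach space, let x ≠ y ∈ D, and let γ be a λ-curve in D with endpoints x and y (with 0 < λ ≤ 1/2). Then γ is λ-short: for all points u, v on γ, ℓ_k(γ[u,v]) ≤ k_D(u,v) + λ. -/
open Set Metric MeasureTheory

noncomputable section

variable {E : Type*} [NormedAddCommGroup E]

variable {F : Type*} [NormedAddCommGroup F]

/-!
A subarc is at least as long as the distance between its endpoints and at most as long as the
whole curve `γ` from `x` to `y`, so `k_D(γ s, γ t) ≤ ℓ_k(γ) ≤ (9/8) k_D(x, y) ≤ 2 k_D(x, y)`.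
The quasigeodesic constant exceeds `1` by at most `λ / (2 k_D(x, y))`, which on the subarc
therefore costs at most `λ`.
-/

lemma qhLen_nonneg (D : Set E) (γ : ℝ → E) {a b : ℝ} (hab : a ≤ b) : 0 ≤ qhLen D γ a b :=
  intervalIntegral.integral_nonneg hab fun _ _ => one_div_nonneg.mpr infDist_nonneg

lemma qhDist_nonneg (D : Set E) (x y : E) : 0 ≤ qhDist D x y := by
  apply Real.sInf_nonneg
  rintro L ⟨T, γ, hγ, -, -, rfl⟩
  exact qhLen_nonneg D γ hγ.le

namespace IsArc

variable {D : Set E} {γ : ℝ → E} {a b : ℝ}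

lemma mono (hγ : IsArc D γ a b) {s t : ℝ} (hs : s ∈ Icc a b) (ht : t ∈ Icc a b) (hst : s ≤ t) :
    IsArc D γ s t where
  le := hst
  lip := hγ.lip.mono (Icc_subset_Icc hs.1 ht.2)
  unit u v hu hv := hγ.unit u v (Icc_subset_Icc hs.1 ht.2 hu) (Icc_subset_Icc hs.1 ht.2 hv)
  mem u hu := hγ.mem u (Icc_subset_Icc hs.1 ht.2 hu)

lemma comp_add_right (hγ : IsArc D γ a b) (c : ℝ) :
    IsArc D (fun u => γ (u + c)) (a - c) (b - c) := by
  have hmaps : MapsTo (· + c) (Icc (a - c) (b - c)) (Icc a b) := fun u hu =>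
    ⟨by linarith [hu.1], by linarith [hu.2]⟩
  refine ⟨by linarith [hγ.le], fun u hu v hv => ?_, fun s t hs ht hst => ?_,
    fun u hu => hγ.mem _ (hmaps hu)⟩
  · simpa [edist_add_right] using hγ.lip (hmaps hu) (hmaps hv)
  · have hmono : MonotoneOn (· + c) (Icc s t) := fun u _ v _ huv => by simpa using huv
    change eVariationOn (γ ∘ (· + c)) (Icc s t) = _
    rw [eVariationOn.comp_eq_of_monotoneOn γ _ hmono, image_add_const_Icc,
      hγ.unit _ _ (hmaps hs) (hmaps ht) (by linarith)]
    ring_nf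

lemma continuousOn_one_div_dB (hD : IsOpen D) (hDc : Dᶜ.Nonempty) (hγ : IsArc D γ a b) :
    ContinuousOn (fun u => 1 / dB D (γ u)) (Icc a b) := by
  refine continuousOn_const.div
    ((continuous_infDist_pt Dᶜ).comp_continuousOn hγ.lip.continuousOn) fun u hu => ?_
  exact ((hD.isClosed_compl.notMem_iff_infDist_pos hDc).mp (not_not.mpr (hγ.mem u hu))).ne'

lemma qhLen_le (hD : IsOpen D) (hDc : Dᶜ.Nonempty) (hγ : IsArc D γ a b) {s t : ℝ}
    (hs : s ∈ Icc a b) (ht : t ∈ Icc a b) (hst : s ≤ t) : qhLen D γ s t ≤ qhLen D γ a b :=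
  intervalIntegral.integral_mono_interval hs.1 hst ht.2
    (Filter.Eventually.of_forall fun _ => one_div_nonneg.mpr infDist_nonneg)
    ((hγ.continuousOn_one_div_dB hD hDc).intervalIntegrable_of_Icc hγ.le)

end IsArc

lemma qhLen_comp_add_right (D : Set E) (γ : ℝ → E) (a b c : ℝ) :
    qhLen D (fun u => γ (u + c)) (a - c) (b - c) = qhLen D γ a b := by
  simp only [qhLen, intervalIntegral.integral_comp_add_right (fun u => 1 / dB D (γ u)) c,
    sub_add_cancel]

lemma qhDist_le_qhLen {D : Set E} {γ : ℝ → E} {a b : ℝ} (hγ : IsArc D γ a b) :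
    qhDist D (γ a) (γ b) ≤ qhLen D γ a b := by
  have hshift := hγ.comp_add_right a
  rw [sub_self] at hshift
  refine csInf_le ⟨0, ?_⟩ ⟨b - a, _, hshift, by simp, by simp, ?_⟩
  · rintro L ⟨T, δ, hδ, -, -, rfl⟩
    exact qhLen_nonneg D δ hδ.le
  · simpa using (qhLen_comp_add_right D γ a b a).symm

lemma cLam_mul_le {D : Set E} {lam : ℝ} {x y : E} {k : ℝ} (hlam : 0 ≤ lam) (hk : 0 ≤ k)
    (hkK : k ≤ 2 * qhDist D x y) : cLam D lam x y * k ≤ k + lam := by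
  set K := qhDist D x y
  rcases (hk.trans hkK).eq_or_lt with h2K | h2K
  · have hk0 : k = 0 := by linarith
    simp [hk0, hlam]
  · calc cLam D lam x y * k ≤ (1 + lam / (2 * K)) * k :=
          mul_le_mul_of_nonneg_right (min_le_left _ _) hk
      _ = k + lam * (k / (2 * K)) := by ring
      _ ≤ k + lam * 1 := by gcongr; exact (div_le_one h2K).mpr hkK
      _ = k + lam := by ring

theorem stmt4_general
    (D : Set E) (hD : IsProperDomain D) (lam : ℝ) (hlam₀ : 0 < lam)
    (γ : ℝ → E) (a b : ℝ) (hγ : IsLamCurve D lam γ a b) :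
    ∀ s t, s ∈ Set.Icc a b → t ∈ Set.Icc a b → s ≤ t →
      qhLen D γ s t ≤ qhDist D (γ s) (γ t) + lam := by
  intro s t hs ht hst
  obtain ⟨harc, hqg⟩ := hγ
  have hab : a ≤ b := harc.le
  have hK := qhDist_nonneg D (γ a) (γ b)
  have hsub_le : qhDist D (γ s) (γ t) ≤ 2 * qhDist D (γ a) (γ b) :=
    calc qhDist D (γ s) (γ t) ≤ qhLen D γ s t := qhDist_le_qhLen (harc.mono hs ht hst)
      _ ≤ qhLen D γ a b := harc.qhLen_le hD.1 hD.2.2 hs ht hst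
      _ ≤ cLam D lam (γ a) (γ b) * qhDist D (γ a) (γ b) :=
          hqg a b (left_mem_Icc.mpr hab) (right_mem_Icc.mpr hab) hab
      _ ≤ 9 / 8 * qhDist D (γ a) (γ b) := mul_le_mul_of_nonneg_right (min_le_right _ _) hK
      _ ≤ 2 * qhDist D (γ a) (γ b) := by linarith
  calc qhLen D γ s t ≤ cLam D lam (γ a) (γ b) * qhDist D (γ s) (γ t) := hqg s t hs ht hst
    _ ≤ qhDist D (γ s) (γ t) + lam :=
        cLam_mul_le hlam₀.le (qhDist_nonneg D _ _) hsub_le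

/-- Every `λ`-curve is `λ`-short. -/
theorem stmt4 [NormedSpace ℝ E] [CompleteSpace E]
    (D : Set E) (hD : IsProperDomain D) (lam : ℝ) (hlam₀ : 0 < lam) (hlam₁ : lam ≤ 1 / 2)
    (x y : E) (hx : x ∈ D) (hy : y ∈ D) (hxy : x ≠ y)
    (γ : ℝ → E) (a b : ℝ) (hγ : IsLamCurve D lam γ a b) (ha : γ a = x) (hb : γ b = y) :
    ∀ s t, s ∈ Set.Icc a b → t ∈ Set.Icc a b → s ≤ t →
      qhLen D γ s t ≤ qhDist D (γ s) (γ t) + lam :=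
  stmt4_general D hD lam hlam₀ γ a b hγ

end
end
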